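/- With M = {(u,v) ∈ K{X}° × K{X}° : uf - v ∈ I_0} and G a finite subset of M containing (1,f) and such that {g : (0,g) ∈ G} is a Gröbner basis of I_0: if every J-pair of G is covered by G, then G is a strong Gröbner basis of M (the Cover Theorem for Tate algebras). -/

import Mathlib

open MvPowerSeries

namespace TateStmt

variable {n : ℕ} {O : Type*} [CommRing O]

/-- The Tate condition: the (π-adic) valuations of the coefficients tend to infinity. -/
def IsTate (π : O) (f : MvPowerSeries (Fin n) O) : Prop :=
  ∀ N : ℕ, {i : Fin n →₀ ℕ | ¬ π ^ N ∣ MvPowerSeries.coeff i f}.Finite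

/-- The integral Tate algebra `K{X}°`, as a subring of the ring of formal power series
over the valuation ring `O = K°`. -/
def TateAlgebra (n : ℕ) (O : Type*) [CommRing O] (π : O) :
    Subring (MvPowerSeries (Fin n) O) where
  carrier := {f | IsTate π f}
  zero_mem' := by
    intro N
    apply Set.Finite.subset (Set.finite_empty)
    intro i hi
    exact hi (Dvd.intro 0 (by simp))
  one_mem' := by
    intro N
    apply Set.Finite.subset (Set.finite_singleton (0 : Fin n →₀ ℕ))
    intro i hi
    by_contra h
    rw [Set.mem_singleton_iff] at h
    apply hi
    rw [MvPowerSeries.coeff_one, if_neg h]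
    exact Dvd.intro 0 (by simp)
  add_mem' := by
    intro f g hf hg N
    apply Set.Finite.subset ((hf N).union (hg N))
    intro i hi
    by_contra h
    simp only [Set.mem_union, Set.mem_setOf_eq, not_or, not_not] at h
    exact hi (by rw [map_add]; exact dvd_add h.1 h.2)
  neg_mem' := by
    intro f hf N
    apply Set.Finite.subset (hf N)
    intro i hi
    by_contra h
    simp only [Set.mem_setOf_eq, not_not] at h
    exact hi (by rw [map_neg]; exact (dvd_neg).mpr h)
  mul_mem' := by
    intro f g hf hg N
    apply Set.Finite.subset (Set.Finite.add (hf N) (hg N))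
    intro i hi
    by_contra h
    apply hi
    rw [MvPowerSeries.coeff_mul]
    apply Finset.dvd_sum
    intro p hp
    rw [Finset.HasAntidiagonal.mem_antidiagonal] at hp
    by_cases h1 : π ^ N ∣ MvPowerSeries.coeff p.1 f
    · exact Dvd.dvd.mul_right h1 _
    · by_cases h2 : π ^ N ∣ MvPowerSeries.coeff p.2 g
      · exact Dvd.dvd.mul_left h2 _
      · exact absurd (hp ▸ Set.add_mem_add h1 h2) h

/-- Tate monomials `π^a X^i`, identified with pairs `(a, i) ∈ ℕ × ℕ^n`. -/
abbrev TMon (n : ℕ) := ℕ × (Fin n →₀ ℕ)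

noncomputable def monMul (a b : TMon n) : TMon n := (a.1 + b.1, a.2 + b.2)
def monDvd (a b : TMon n) : Prop := a.1 ≤ b.1 ∧ a.2 ≤ b.2
noncomputable def monDiv (a b : TMon n) : TMon n := (a.1 - b.1, a.2 - b.2)
noncomputable def monLcm (a b : TMon n) : TMon n := (max a.1 b.1, a.2 ⊔ b.2)

/-- The valuation-first term order: compare valuations first (a *smaller* valuation gives a
*larger* term), then exponents via the monomial order `mo`. -/
def termLT (mo : MonomialOrder (Fin n)) (a b : TMon n) : Prop :=
  b.1 < a.1 ∨ (a.1 = b.1 ∧ mo.toSyn a.2 < mo.toSyn b.2)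

def termLE (mo : MonomialOrder (Fin n)) (a b : TMon n) : Prop :=
  a = b ∨ termLT mo a b

/-- Order on `Option (TMon n)`, where `none` (the "monomial" of `0`) is smallest. -/
def optLT (mo : MonomialOrder (Fin n)) : Option (TMon n) → Option (TMon n) → Prop
  | none, none => False
  | none, some _ => True
  | some _, none => False
  | some a, some b => termLT mo a b

def optLE (mo : MonomialOrder (Fin n)) (a b : Option (TMon n)) : Prop :=
  a = b ∨ optLT mo a b

noncomputable def optMul (t : TMon n) : Option (TMon n) → Option (TMon n)
  | none => none
  | some a => some (monMul t a)

/-- `(a, i)` is (the monomial of) a term of `f`: the coefficient of `X^i` has valuation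
exactly `a`. -/
def IsTerm (π : O) (f : MvPowerSeries (Fin n) O) (m : TMon n) : Prop :=
  π ^ m.1 ∣ MvPowerSeries.coeff m.2 f ∧ ¬ π ^ (m.1 + 1) ∣ MvPowerSeries.coeff m.2 f

/-- `m` is the leading monomial of `f`. -/
def IsLM (π : O) (mo : MonomialOrder (Fin n)) (f : MvPowerSeries (Fin n) O) (m : TMon n) :
    Prop :=
  IsTerm π f m ∧ ∀ m', IsTerm π f m' → termLE mo m' m

/-- `s` is the leading monomial of `f`, with the convention `LM 0 = none`. -/
def IsLMopt (π : O) (mo : MonomialOrder (Fin n)) (f : MvPowerSeries (Fin n) O) :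
    Option (TMon n) → Prop
  | none => f = 0
  | some m => IsLM π mo f m

/-- All coefficients of `f` are divisible by `π^N`, i.e. `val f ≥ N`. -/
def DvdAll (π : O) (N : ℕ) (f : MvPowerSeries (Fin n) O) : Prop :=
  ∀ i, π ^ N ∣ MvPowerSeries.coeff i f

/-- The Gauss valuation of `f` is exactly `N`. -/
def ValEq (π : O) (f : MvPowerSeries (Fin n) O) (N : ℕ) : Prop :=
  DvdAll π N f ∧ ¬ DvdAll π (N + 1) f

/-- `G` is a Gröbner basis of the ideal `I` of the (integral) Tate algebra. -/
def IsGB (π : O) (mo : MonomialOrder (Fin n)) (G : Set (TateAlgebra n O π))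
    (I : Ideal (TateAlgebra n O π)) : Prop :=
  (∀ g ∈ G, g ∈ I) ∧
    ∀ f ∈ I, (f : MvPowerSeries (Fin n) O) ≠ 0 → ∀ mf,
      IsLM π mo (f : MvPowerSeries (Fin n) O) mf →
        ∃ g ∈ G, ∃ mg, IsLM π mo (g : MvPowerSeries (Fin n) O) mg ∧ monDvd mg mf

/-- The module `M = {(u,v) : u f - v ∈ I₀}`. -/
def SigMod {π : O} (I0 : Ideal (TateAlgebra n O π)) (f : TateAlgebra n O π) :
    Set (TateAlgebra n O π × TateAlgebra n O π) :=
  {p | p.1 * f - p.2 ∈ I0}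

/-- `p = (u₁,v₁)` is top-reducible by `q = (u₂,v₂)`. -/
def TopRed (π : O) (mo : MonomialOrder (Fin n))
    (p q : TateAlgebra n O π × TateAlgebra n O π) : Prop :=
  (q.2 = 0 ∧ ∃ mu mq, IsLM π mo (p.1 : MvPowerSeries (Fin n) O) mu ∧
      IsLM π mo (q.1 : MvPowerSeries (Fin n) O) mq ∧ monDvd mq mu)
  ∨ (p.2 ≠ 0 ∧ q.2 ≠ 0 ∧
      ∃ m1 m2, IsLM π mo (p.2 : MvPowerSeries (Fin n) O) m1 ∧
        IsLM π mo (q.2 : MvPowerSeries (Fin n) O) m2 ∧ monDvd m2 m1 ∧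
        ∃ s1 s2, IsLMopt π mo (p.1 : MvPowerSeries (Fin n) O) s1 ∧
          IsLMopt π mo (q.1 : MvPowerSeries (Fin n) O) s2 ∧
          optLE mo (optMul (monDiv m1 m2) s2) s1)

/-- `G` is a strong Gröbner basis of the module `M = SigMod I0 f`. -/
def IsSGB (π : O) (mo : MonomialOrder (Fin n)) (I0 : Ideal (TateAlgebra n O π))
    (f : TateAlgebra n O π) (G : Set (TateAlgebra n O π × TateAlgebra n O π)) : Prop :=
  G.Finite ∧ G ⊆ SigMod I0 f ∧
    ∀ p ∈ SigMod I0 f, p ≠ 0 → ∃ q ∈ G, TopRed π mo p q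

/-- `p` is covered by `q`. -/
def Covers (π : O) (mo : MonomialOrder (Fin n))
    (q p : TateAlgebra n O π × TateAlgebra n O π) : Prop :=
  ∃ mu mq, IsLM π mo (p.1 : MvPowerSeries (Fin n) O) mu ∧
    IsLM π mo (q.1 : MvPowerSeries (Fin n) O) mq ∧ monDvd mq mu ∧
    ∃ sv sp, IsLMopt π mo (q.2 : MvPowerSeries (Fin n) O) sv ∧
      IsLMopt π mo (p.2 : MvPowerSeries (Fin n) O) sp ∧
      optLT mo (optMul (monDiv mu mq) sv) sp

def CoveredBy (π : O) (mo : MonomialOrder (Fin n))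
    (p : TateAlgebra n O π × TateAlgebra n O π)
    (G : Set (TateAlgebra n O π × TateAlgebra n O π)) : Prop :=
  ∃ q ∈ G, Covers π mo q p

/-- The Tate series `π^a X^i`, as an element of the Tate algebra. -/
noncomputable def monTA (π : O) (m : TMon n) : TateAlgebra n O π :=
  ⟨MvPowerSeries.monomial m.2 (π ^ m.1), by
    intro N
    apply Set.Finite.subset (Set.finite_singleton m.2)
    intro i hi
    by_contra h
    rw [Set.mem_singleton_iff] at h
    apply hi
    rw [MvPowerSeries.coeff_monomial, if_neg h]
    exact Dvd.intro 0 (by simp)⟩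

noncomputable def smulPair (π : O) (m : TMon n) (p : TateAlgebra n O π × TateAlgebra n O π) :
    TateAlgebra n O π × TateAlgebra n O π :=
  (monTA π m * p.1, monTA π m * p.2)

/-- `r` is the J-pair of `(p, q)` (with `p` carrying the larger signature part). -/
def IsJPair (π : O) (mo : MonomialOrder (Fin n))
    (p q r : TateAlgebra n O π × TateAlgebra n O π) : Prop :=
  ∃ m1 m2, IsLM π mo (p.2 : MvPowerSeries (Fin n) O) m1 ∧
    IsLM π mo (q.2 : MvPowerSeries (Fin n) O) m2 ∧
    (∃ s1 s2, IsLMopt π mo (p.1 : MvPowerSeries (Fin n) O) s1 ∧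
      IsLMopt π mo (q.1 : MvPowerSeries (Fin n) O) s2 ∧
      optLT mo (optMul (monDiv (monLcm m1 m2) m2) s2)
        (optMul (monDiv (monLcm m1 m2) m1) s1)) ∧
    r = smulPair π (monDiv (monLcm m1 m2) m1) p

section Residue

variable {k : Type*} [Field k]

/-- `P = ρ(f)`, the reduction mod `π` of `π^{-val f} f`. -/
def IsRho (π : O) (φ : O →+* k) (f : MvPowerSeries (Fin n) O)
    (P : MvPolynomial (Fin n) k) : Prop :=
  ∃ (N : ℕ) (g : MvPowerSeries (Fin n) O), f = (π ^ N) • g ∧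
    (∃ i, ¬ π ∣ MvPowerSeries.coeff i g) ∧
    ∀ i, MvPolynomial.coeff i P = φ (MvPowerSeries.coeff i g)

def rhoSet (π : O) (φ : O →+* k) (S : Set (TateAlgebra n O π)) :
    Set (MvPolynomial (Fin n) k) :=
  {P | ∃ f ∈ S, IsRho π φ (f : MvPowerSeries (Fin n) O) P}

/-- `Ī_N`: the image in `k[X]` of `π^{-N} (I ∩ π^N K{X}°)`. -/
def BarIdeal (π : O) (φ : O →+* k) (I : Ideal (TateAlgebra n O π)) (N : ℕ) :
    Set (MvPolynomial (Fin n) k) :=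
  {P | ∃ f ∈ I, ∃ g : MvPowerSeries (Fin n) O, (f : MvPowerSeries (Fin n) O) = (π ^ N) • g ∧
    ∀ i, MvPolynomial.coeff i P = φ (MvPowerSeries.coeff i g)}

/-- `d` is the leading exponent of the polynomial `P` for the monomial order `mo`. -/
def IsPolyLM (mo : MonomialOrder (Fin n)) (P : MvPolynomial (Fin n) k)
    (d : Fin n →₀ ℕ) : Prop :=
  MvPolynomial.coeff d P ≠ 0 ∧ ∀ e, MvPolynomial.coeff e P ≠ 0 → mo.toSyn e ≤ mo.toSyn d

/-- `G` is a Gröbner basis of the set (ideal) `J` of polynomials over the residue field. -/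
def IsPolyGB (mo : MonomialOrder (Fin n)) (G : Set (MvPolynomial (Fin n) k))
    (J : Set (MvPolynomial (Fin n) k)) : Prop :=
  G ⊆ J ∧ ∀ P ∈ J, P ≠ 0 → ∀ d, IsPolyLM mo P d →
    ∃ Q ∈ G, ∃ e, IsPolyLM mo Q e ∧ e ≤ d

end Residue

end TateStmt

/-!
Suppose a nonzero `(u, v) ∈ M` is not top-reducible by `G`, and let `T = LM u`. If a syzygy of
`G` divides `T`, or if the element `q ∈ G` minimising `(T / LM q.1) · LM q.2` gives a monomial
smaller than `LM v`, subtracting a multiple of it lowers the signature and keeps `LM v`. If that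
monomial equals `LM v`, then `q` top-reduces `(u, v)`. If it is larger, the same subtraction
makes it the new `LM v`, and the cover hypothesis, applied to the J-pair of `q` with a would-be
reducer, shows that the new pair is still irreducible. The order on terms is not well-founded,
but the Gröbner basis property of `{g : (0, g) ∈ G}` forces `LM v ≤ T · LM f`, so the
signatures keep valuation at most that of the initial `LM v`, where the order is well-founded.
-/

namespace TateStmt

section TermOrder

variable {n : ℕ} {mo : MonomialOrder (Fin n)} {a b c : TMon n}

/-- `termLT` is the strict order pulled back along this embedding; the valuation enters through
`ℕᵒᵈ` because a larger valuation gives a smaller term. -/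
noncomputable def termKey (mo : MonomialOrder (Fin n)) (a : TMon n) : ℕᵒᵈ ×ₗ mo.syn :=
  toLex (OrderDual.toDual a.1, mo.toSyn a.2)

theorem termKey_injective : Function.Injective (termKey mo) := fun a b h => by
  simp only [termKey, Prod.mk.injEq, EmbeddingLike.apply_eq_iff_eq] at h
  exact Prod.ext h.1 h.2

theorem termKey_add : termKey mo (a + b) = termKey mo a + termKey mo b := by
  simp [termKey, map_add]
  rfl

theorem termLT_iff_termKey : termLT mo a b ↔ termKey mo a < termKey mo b := by
  simp [termLT, termKey, Prod.Lex.toLex_lt_toLex]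

theorem termLE_iff_termKey : termLE mo a b ↔ termKey mo a ≤ termKey mo b := by
  rw [termLE, termLT_iff_termKey, le_iff_eq_or_lt, termKey_injective.eq_iff]

theorem termLT_trichotomy (a b : TMon n) : termLT mo a b ∨ a = b ∨ termLT mo b a := by
  simp only [termLT_iff_termKey, ← termKey_injective.eq_iff (f := termKey mo)]
  exact lt_trichotomy _ _

theorem termLT_add_left_iff : termLT mo (c + a) (c + b) ↔ termLT mo a b := by
  simp only [termLT_iff_termKey, termKey_add, add_lt_add_iff_left]

theorem fst_le_of_termLT (h : termLT mo a b) : b.1 ≤ a.1 := by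
  rcases h with h | ⟨h, -⟩ <;> omega

theorem fst_le_of_termLE (h : termLE mo a b) : b.1 ≤ a.1 := by
  rcases h with rfl | h
  exacts [le_rfl, fst_le_of_termLT h]

theorem not_termLT_iff : ¬ termLT mo a b ↔ termLE mo b a := by
  rw [termLT_iff_termKey, termLE_iff_termKey, not_lt]

theorem wellFounded_termLT_of_fst_le (B : ℕ) :
    WellFounded fun a b : TMon n => a.1 ≤ B ∧ termLT mo a b := by
  refine Subrelation.wf ?_ (InvImage.wf (fun a : TMon n => toLex (B - a.1, mo.toSyn a.2))
    wellFounded_lt)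
  rintro a b ⟨ha, h | ⟨h, h'⟩⟩
  · exact Prod.Lex.toLex_lt_toLex.2 (Or.inl (by omega))
  · exact Prod.Lex.toLex_lt_toLex.2 (Or.inr ⟨by rw [h], h'⟩)

noncomputable def optKey (mo : MonomialOrder (Fin n)) :
    Option (TMon n) → WithBot (ℕᵒᵈ ×ₗ mo.syn)
  | none => ⊥
  | some a => termKey mo a

variable {s t x : Option (TMon n)}

theorem optLT_iff_optKey : optLT mo s t ↔ optKey mo s < optKey mo t := by
  cases s <;> cases t <;> simp [optLT, optKey, termLT_iff_termKey]

theorem optKey_injective : Function.Injective (optKey mo) := by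
  rintro (_ | a) (_ | b) h <;> simp_all [optKey, termKey_injective.eq_iff]

theorem optLE_iff_optKey : optLE mo s t ↔ optKey mo s ≤ optKey mo t := by
  rw [optLE, optLT_iff_optKey, le_iff_eq_or_lt, optKey_injective.eq_iff]

theorem optKey_optMul : optKey mo (optMul a s) = termKey mo a + optKey mo s := by
  cases s with
  | none => simp [optMul, optKey]
  | some b => rw [optMul, optKey, optKey, ← WithBot.coe_add, ← termKey_add]; rfl

theorem optLE_none (s : Option (TMon n)) : optLE mo none s := by
  rw [optLE_iff_optKey]
  exact bot_le

theorem optLE_of_optLT (h : optLT mo s t) : optLE mo s t :=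
  Or.inr h

theorem optLE_trans (h₁ : optLE mo s t) (h₂ : optLE mo t x) : optLE mo s x := by
  rw [optLE_iff_optKey] at *
  exact h₁.trans h₂

theorem optLT_of_optLE_of_optLT (h₁ : optLE mo s t) (h₂ : optLT mo t x) : optLT mo s x := by
  rw [optLE_iff_optKey, optLT_iff_optKey] at *
  exact h₁.trans_lt h₂

theorem optLT_optMul_iff : optLT mo (optMul a s) (optMul a t) ↔ optLT mo s t := by
  simp only [optLT_iff_optKey, optKey_optMul]
  exact WithBot.add_lt_add_iff_left WithBot.coe_ne_bot

theorem optMul_add : optMul (a + b) s = optMul a (optMul b s) := by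
  cases s <;> simp [optMul, monMul, add_assoc]

end TermOrder

section Valuation

open IsDiscreteValuationRing

variable {O : Type*} [CommRing O] [IsDomain O] [IsDiscreteValuationRing O] {π : O}

theorem pow_dvd_iff_le_addVal (hπ : Irreducible π) {k : ℕ} {c : O} :
    π ^ k ∣ c ↔ (k : ℕ∞) ≤ addVal O c := by
  rw [← addVal_le_iff_dvd, hπ.addVal_pow]

theorem addVal_eq_iff (hπ : Irreducible π) {k : ℕ} {c : O} :
    addVal O c = k ↔ π ^ k ∣ c ∧ ¬ π ^ (k + 1) ∣ c := by
  rw [pow_dvd_iff_le_addVal hπ, pow_dvd_iff_le_addVal hπ, Nat.cast_succ, not_le,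
    ENat.lt_add_one_iff (ENat.natCast_ne_top k), le_antisymm_iff, and_comm]

theorem exists_addVal_eq {c : O} (hc : c ≠ 0) : ∃ k : ℕ, addVal O c = k := by
  obtain ⟨k, hk⟩ := ENat.ne_top_iff_exists.1 (addVal_eq_top_iff.not.2 hc)
  exact ⟨k, hk.symm⟩

theorem exists_mul_eq_of_addVal_eq {a b : ℕ} {c d : O} (hab : b ≤ a) (hc : addVal O c = a)
    (hd : addVal O d = b) : ∃ e : O, addVal O e = (a - b : ℕ) ∧ e * d = c := by
  obtain ⟨e, rfl⟩ := addVal_le_iff_dvd.1 (hd.trans_le (hc ▸ Nat.cast_le.2 hab))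
  refine ⟨e, ?_, mul_comm _ _⟩
  have he : e ≠ 0 := right_ne_zero_of_mul (addVal_eq_top_iff.not.1 (hc ▸ ENat.natCast_ne_top a))
  obtain ⟨k, hk⟩ := exists_addVal_eq he
  rw [addVal_mul, hd, hk, ← Nat.cast_add, Nat.cast_inj] at hc
  rw [hk, ← hc, Nat.add_sub_cancel_left]

end Valuation

section LeadingMonomial

open IsDiscreteValuationRing Finset.HasAntidiagonal

variable {n : ℕ} {O : Type*} [CommRing O] {π : O} {mo : MonomialOrder (Fin n)}
  {f g : MvPowerSeries (Fin n) O} {m m' : TMon n} {s : Option (TMon n)}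

theorem IsLM.unique (h : IsLM π mo f m) (h' : IsLM π mo f m') : m = m' := by
  rw [← termKey_injective.eq_iff (f := termKey mo)]
  exact le_antisymm (termLE_iff_termKey.1 (h'.2 m h.1)) (termLE_iff_termKey.1 (h.2 m' h'.1))

theorem IsLM.ne_zero (h : IsLM π mo f m) : f ≠ 0 := by
  rintro rfl
  exact h.1.2 (by simp)

theorem IsLMopt.eq_some (hs : IsLMopt π mo f s) (hm : IsLM π mo f m) : s = some m := by
  cases s with
  | none => exact absurd hs hm.ne_zero
  | some m' => exact congrArg some (hs.unique hm)

theorem IsLM.neg (h : IsLM π mo f m) : IsLM π mo (-f) m := by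
  simpa only [IsLM, IsTerm, map_neg, dvd_neg] using h

theorem IsLMopt.neg (h : IsLMopt π mo f s) : IsLMopt π mo (-f) s := by
  cases s with
  | none => exact (neg_eq_zero.2 h : _)
  | some m => exact IsLM.neg h

theorem isLM_of_pow_dvd (hm : IsTerm π f m) (hdvd : ∀ i, π ^ m.1 ∣ coeff i f)
    (hle : ∀ i, ¬ π ^ (m.1 + 1) ∣ coeff i f → mo.toSyn i ≤ mo.toSyn m.2) :
    IsLM π mo f m := by
  refine ⟨hm, fun m' hm' => ?_⟩
  have hval : m.1 ≤ m'.1 := by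
    by_contra! h
    exact hm'.2 ((pow_dvd_pow π h).trans (hdvd m'.2))
  rcases hval.lt_or_eq with h | h
  · exact Or.inr (Or.inl h)
  · rcases (hle m'.2 (h ▸ hm'.2)).lt_or_eq with h' | h'
    · exact Or.inr (Or.inr ⟨h.symm, h'⟩)
    · exact Or.inl (Prod.ext h.symm (mo.toSyn.injective h'))

variable [IsDomain O] [IsDiscreteValuationRing O]

theorem isTerm_iff (hπ : Irreducible π) : IsTerm π f m ↔ addVal O (coeff m.2 f) = m.1 :=
  (addVal_eq_iff hπ).symm

theorem IsLM.pow_dvd_coeff (hπ : Irreducible π) (h : IsLM π mo f m) (i : Fin n →₀ ℕ) :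
    π ^ m.1 ∣ coeff i f := by
  by_contra hi
  obtain ⟨k, hk⟩ := exists_addVal_eq (c := coeff i f) fun h0 => hi (h0 ▸ dvd_zero _)
  have hterm : IsTerm π f (k, i) := (isTerm_iff hπ).2 hk
  exact hi ((pow_dvd_pow π (fst_le_of_termLE (h.2 _ hterm))).trans hterm.1)

theorem IsLM.toSyn_le (hπ : Irreducible π) (h : IsLM π mo f m) {i : Fin n →₀ ℕ}
    (hi : ¬ π ^ (m.1 + 1) ∣ coeff i f) : mo.toSyn i ≤ mo.toSyn m.2 := by
  rcases h.2 (m.1, i) ⟨h.pow_dvd_coeff hπ i, hi⟩ with h' | h' | ⟨-, h'⟩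
  · rw [← h']
  · omega
  · exact h'.le

theorem IsLM.pow_succ_dvd_coeff_of_termLT (hπ : Irreducible π) (hg : IsLM π mo g m')
    (hlt : termLT mo m' m) {i : Fin n →₀ ℕ} (hi : mo.toSyn m.2 ≤ mo.toSyn i) :
    π ^ (m.1 + 1) ∣ coeff i g := by
  by_contra h
  rcases hlt with hlt | ⟨heq, hlt⟩
  · exact h ((pow_dvd_pow π hlt).trans (hg.pow_dvd_coeff hπ i))
  · exact not_lt_of_ge (hg.toSyn_le hπ (heq ▸ h)) (hlt.trans_le hi)

theorem IsLM.add_of_optLT (hπ : Irreducible π) (hf : IsLM π mo f m) (hg : IsLMopt π mo g s)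
    (hs : optLT mo s (some m)) : IsLM π mo (f + g) m := by
  cases s with
  | none => rwa [show g = 0 from hg, add_zero]
  | some m' =>
    have hgm := hg.pow_succ_dvd_coeff_of_termLT hπ hs le_rfl
    refine isLM_of_pow_dvd ⟨?_, ?_⟩ (fun i => ?_) (fun i hi => ?_)
    · rw [map_add]
      exact dvd_add hf.1.1 ((pow_dvd_pow π (by omega)).trans hgm)
    · rw [map_add, dvd_add_left hgm]
      exact hf.1.2
    · rw [map_add]
      exact dvd_add (hf.pow_dvd_coeff hπ i)
        ((pow_dvd_pow π (fst_le_of_termLT hs)).trans (hg.pow_dvd_coeff hπ i))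
    · by_contra! hlt
      refine hi ?_
      rw [map_add]
      exact dvd_add (not_not.1 (mt (hf.toSyn_le hπ) (not_le_of_gt hlt)))
        (hg.pow_succ_dvd_coeff_of_termLT hπ hs hlt.le)

theorem IsLM.sub_of_optLT (hπ : Irreducible π) (hf : IsLM π mo f m) (hg : IsLMopt π mo g s)
    (hs : optLT mo s (some m)) : IsLM π mo (f - g) m := by
  rw [sub_eq_add_neg]
  exact hf.add_of_optLT hπ hg.neg hs

theorem IsLM.sub_of_optLT' (hπ : Irreducible π) (hf : IsLMopt π mo f s) (hg : IsLM π mo g m)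
    (hs : optLT mo s (some m)) : IsLM π mo (f - g) m := by
  simpa using (hg.sub_of_optLT hπ hf hs).neg

theorem IsLM.optLT_of_sub (hπ : Irreducible π) (hf : IsLM π mo f m) (hg : IsLM π mo g m)
    (hc : coeff m.2 f = coeff m.2 g) (hs : IsLMopt π mo (f - g) s) : optLT mo s (some m) := by
  cases s with
  | none => trivial
  | some m'' =>
    obtain ⟨hdvd, hnd⟩ := hs.1
    rw [map_sub] at hdvd hnd
    have hle : m.1 ≤ m''.1 := by
      by_contra! h
      exact hnd ((pow_dvd_pow π h).trans
        (dvd_sub (hf.pow_dvd_coeff hπ _) (hg.pow_dvd_coeff hπ _)))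
    rcases hle.lt_or_eq with h | h
    · exact Or.inl h
    · refine Or.inr ⟨h.symm, lt_of_le_of_ne ?_ fun he => hnd ?_⟩
      · by_contra! hlt
        exact hnd (h ▸ dvd_sub (not_not.1 (mt (hf.toSyn_le hπ) (not_le_of_gt hlt)))
          (not_not.1 (mt (hg.toSyn_le hπ) (not_le_of_gt hlt))))
      · rw [mo.toSyn.injective he, hc, sub_self]
        exact dvd_zero _

theorem IsLM.toSyn_le_of_not_pow_dvd_mul (hπ : Irreducible π) (hf : IsLM π mo f m)
    (hg : IsLM π mo g m') {i j : Fin n →₀ ℕ}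
    (h : ¬ π ^ (m.1 + m'.1 + 1) ∣ coeff i f * coeff j g) :
    mo.toSyn i ≤ mo.toSyn m.2 ∧ mo.toSyn j ≤ mo.toSyn m'.2 := by
  refine ⟨hf.toSyn_le hπ fun hi => h ?_, hg.toSyn_le hπ fun hj => h ?_⟩
  · rw [add_right_comm, pow_add]
    exact mul_dvd_mul hi (hg.pow_dvd_coeff hπ j)
  · rw [add_assoc, pow_add]
    exact mul_dvd_mul (hf.pow_dvd_coeff hπ i) hj

theorem IsLM.mul (hπ : Irreducible π) (hf : IsLM π mo f m) (hg : IsLM π mo g m') :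
    IsLM π mo (f * g) (m + m') := by
  classical
  have hmem : (m.2, m'.2) ∈ antidiagonal (m.2 + m'.2) := mem_antidiagonal.2 rfl
  have hrest : π ^ (m.1 + m'.1 + 1) ∣ ∑ p ∈ (antidiagonal (m.2 + m'.2)).erase (m.2, m'.2),
      coeff p.1 f * coeff p.2 g := by
    refine Finset.dvd_sum fun p hp => ?_
    obtain ⟨hne, hp⟩ := Finset.mem_erase.1 hp
    by_contra hnd
    obtain ⟨h1, h2⟩ := hf.toSyn_le_of_not_pow_dvd_mul hπ hg hnd
    have hsum : mo.toSyn p.1 + mo.toSyn p.2 = mo.toSyn m.2 + mo.toSyn m'.2 := by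
      rw [← map_add, ← map_add, mem_antidiagonal.1 hp]
    obtain ⟨e1, e2⟩ := (add_eq_add_iff_eq_and_eq h1 h2).1 hsum
    exact hne (Prod.ext (mo.toSyn.injective e1) (mo.toSyn.injective e2))
  have hlead : addVal O (coeff m.2 f * coeff m'.2 g) = (m.1 + m'.1 : ℕ) := by
    rw [addVal_mul, (isTerm_iff hπ).1 hf.1, (isTerm_iff hπ).1 hg.1, Nat.cast_add]
  obtain ⟨hl1, hl2⟩ := (addVal_eq_iff hπ).1 hlead
  show IsLM π mo (f * g) (m.1 + m'.1, m.2 + m'.2)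
  refine isLM_of_pow_dvd ⟨?_, ?_⟩ (fun j => ?_) (fun j hj => ?_)
  · rw [coeff_mul, ← Finset.add_sum_erase _ _ hmem]
    exact dvd_add hl1 ((pow_dvd_pow π (Nat.le_succ _)).trans hrest)
  · rw [coeff_mul, ← Finset.add_sum_erase _ _ hmem, dvd_add_left hrest]
    exact hl2
  · rw [coeff_mul]
    refine Finset.dvd_sum fun p _ => ?_
    rw [pow_add]
    exact mul_dvd_mul (hf.pow_dvd_coeff hπ _) (hg.pow_dvd_coeff hπ _)
  · rw [coeff_mul] at hj
    obtain ⟨p, hp, hnd⟩ : ∃ p ∈ antidiagonal j,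
        ¬ π ^ (m.1 + m'.1 + 1) ∣ coeff p.1 f * coeff p.2 g := by
      by_contra! h
      exact hj (Finset.dvd_sum h)
    obtain ⟨h1, h2⟩ := hf.toSyn_le_of_not_pow_dvd_mul hπ hg hnd
    rw [← mem_antidiagonal.1 hp, map_add, map_add]
    exact add_le_add h1 h2

theorem isLM_monomial (hπ : Irreducible π) {c : O} {t : TMon n} (hc : addVal O c = t.1) :
    IsLM π mo (monomial t.2 c) t := by
  classical
  refine isLM_of_pow_dvd ?_ (fun i => ?_) (fun i hi => ?_)
  · rw [isTerm_iff hπ, coeff_monomial_same, hc]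
  · rw [coeff_monomial]
    split_ifs
    exacts [((addVal_eq_iff hπ).1 hc).1, dvd_zero _]
  · rw [coeff_monomial] at hi
    split_ifs at hi with h
    · rw [h]
    · exact absurd (dvd_zero _) hi

theorem IsLM.mul_isLMopt (hπ : Irreducible π) (hf : IsLM π mo f m) (hg : IsLMopt π mo g s) :
    IsLMopt π mo (f * g) (optMul m s) := by
  cases s with
  | none => exact (show g = 0 from hg) ▸ mul_zero f
  | some m' => exact hf.mul hπ hg

theorem isLM_one (hπ : Irreducible π) : IsLM π mo (1 : MvPowerSeries (Fin n) O) 0 := by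
  rw [← monomial_zero_one]
  exact isLM_monomial hπ (by simp)

theorem exists_isLM (hπ : Irreducible π) (hf : IsTate π f) (h0 : f ≠ 0) :
    ∃ m, IsLM π mo f m := by
  classical
  have hex : ∃ a, ∃ i, ¬ π ^ (a + 1) ∣ coeff i f := by
    obtain ⟨i, hi⟩ := (ne_zero_iff_exists_coeff_ne_zero f).1 h0
    obtain ⟨k, hk⟩ := exists_addVal_eq hi
    exact ⟨k, i, ((addVal_eq_iff hπ).1 hk).2⟩
  set a := Nat.find hex
  -- `a` is the minimal valuation of the coefficients of `f`
  have hdvd : ∀ i, π ^ a ∣ coeff i f := by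
    intro i
    rcases ha : a with _ | b
    · simp
    · by_contra hi
      exact Nat.find_min hex (show b < a by omega) ⟨i, hi⟩
  obtain ⟨e, he, hmax⟩ := Set.exists_max_image _ mo.toSyn (hf (a + 1)) (Nat.find_spec hex)
  exact ⟨(a, e), isLM_of_pow_dvd ⟨hdvd e, he⟩ hdvd fun i hi => hmax i hi⟩

theorem exists_isLMopt (hπ : Irreducible π) (hf : IsTate π f) : ∃ s, IsLMopt π mo f s := by
  by_cases h0 : f = 0
  · exact ⟨none, h0⟩
  · obtain ⟨m, hm⟩ := exists_isLM hπ hf h0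
    exact ⟨some m, hm⟩

end LeadingMonomial

section Reduction

open IsDiscreteValuationRing

variable {n : ℕ} {O : Type*} [CommRing O] {π : O} {mo : MonomialOrder (Fin n)}
  {I0 : Ideal (TateAlgebra n O π)} {f : TateAlgebra n O π}
  {p q : TateAlgebra n O π × TateAlgebra n O π}

theorem isTate_monomial (i : Fin n →₀ ℕ) (c : O) : IsTate π (monomial i c) := by
  classical
  intro N
  refine (Set.finite_singleton i).subset fun j hj => ?_
  rw [Set.mem_singleton_iff]
  by_contra h
  exact hj (by rw [coeff_monomial, if_neg h]; exact dvd_zero _)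

theorem sub_mul_mem_sigMod (hp : p ∈ SigMod I0 f) (hq : q ∈ SigMod I0 f)
    (h : TateAlgebra n O π) : (p.1 - h * q.1, p.2 - h * q.2) ∈ SigMod I0 f := by
  have e : (p.1 - h * q.1) * f - (p.2 - h * q.2) = (p.1 * f - p.2) - h * (q.1 * f - q.2) := by
    ring
  show _ ∈ I0
  rw [e]
  exact sub_mem hp (I0.mul_mem_left h hq)

theorem snd_mem_of_fst_eq_zero (hp : p ∈ SigMod I0 f)
    (h0 : (p.1 : MvPowerSeries (Fin n) O) = 0) : p.2 ∈ I0 := by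
  have hp' : p.1 * f - p.2 ∈ I0 := hp
  rwa [ZeroMemClass.coe_eq_zero.1 h0, zero_mul, zero_sub, neg_mem_iff] at hp'

variable [IsDomain O] [IsDiscreteValuationRing O]

theorem isLM_monTA_mul (hπ : Irreducible π) {g : MvPowerSeries (Fin n) O} {m : TMon n}
    (hg : IsLM π mo g m) (t : TMon n) : IsLM π mo (monTA π t * g) (t + m) :=
  (isLM_monomial hπ (hπ.addVal_pow t.1)).mul hπ hg

theorem exists_reduction (hπ : Irreducible π) (hp : p ∈ SigMod I0 f) (hq : q ∈ SigMod I0 f)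
    {T U : TMon n} (hu : IsLM π mo p.1 T) (hU : IsLM π mo q.1 U) (hUT : U ≤ T) :
    ∃ h : TateAlgebra n O π, (p.1 - h * q.1, p.2 - h * q.2) ∈ SigMod I0 f ∧
      (∀ S, IsLMopt π mo (p.1 - h * q.1 : TateAlgebra n O π) S → optLT mo S (some T)) ∧
      ∀ Sq, IsLMopt π mo q.2 Sq →
        IsLMopt π mo (h * q.2 : TateAlgebra n O π) (optMul (T - U) Sq) := by
  obtain ⟨c, hc, hcd⟩ :=
    exists_mul_eq_of_addVal_eq hUT.1 ((isTerm_iff hπ).1 hu.1) ((isTerm_iff hπ).1 hU.1)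
  have hc' : addVal O c = (T - U).1 := hc
  refine ⟨⟨monomial (T - U).2 c, isTate_monomial _ _⟩, sub_mul_mem_sigMod hp hq _,
    fun S hS => ?_, fun Sq hSq => (isLM_monomial hπ hc').mul_isLMopt hπ hSq⟩
  have hlm : IsLM π mo (monomial (T - U).2 c * q.1) T := by
    simpa only [tsub_add_cancel_of_le hUT] using (isLM_monomial hπ hc').mul hπ hU
  refine hu.optLT_of_sub hπ hlm ?_ hS
  rw [coeff_monomial_mul, Prod.snd_sub, if_pos tsub_le_self, tsub_tsub_cancel_of_le hUT.2, hcd]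

end Reduction

section Cover

variable {n : ℕ} {O : Type*} [CommRing O] {π : O} {mo : MonomialOrder (Fin n)}
  {I0 : Ideal (TateAlgebra n O π)} {f : TateAlgebra n O π}
  {G : Set (TateAlgebra n O π × TateAlgebra n O π)}
  {p q : TateAlgebra n O π × TateAlgebra n O π} {T U V W : TMon n} {S : Option (TMon n)}

/-- No element of `G` top-reduces, through the second clause of `TopRed`, a pair whose `u`-part
has leading monomial `S` and whose `v`-part has leading monomial `W`. -/
def NoRegularReducer (π : O) (mo : MonomialOrder (Fin n))
    (G : Set (TateAlgebra n O π × TateAlgebra n O π)) (W : TMon n) (S : Option (TMon n)) :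
    Prop :=
  ∀ q ∈ G, ∀ V, IsLM π mo q.2 V → V ≤ W → ∀ S', IsLMopt π mo q.1 S' →
    ¬ optLE mo (optMul (W - V) S') S

def NoSyzygyDivides (π : O) (mo : MonomialOrder (Fin n))
    (G : Set (TateAlgebra n O π × TateAlgebra n O π)) (T : TMon n) : Prop :=
  ∀ q ∈ G, q.2 = 0 → ∀ U, IsLM π mo q.1 U → ¬ U ≤ T

/-- `q ∈ G` minimises `(T / LM q.1) · LM q.2`, written `T - U + V`, over the elements of `G`
whose `LM q.1` divides `T`. -/
structure IsMinimalAt (π : O) (mo : MonomialOrder (Fin n))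
    (G : Set (TateAlgebra n O π × TateAlgebra n O π)) (T : TMon n)
    (q : TateAlgebra n O π × TateAlgebra n O π) (U V : TMon n) : Prop where
  mem : q ∈ G
  isLM_fst : IsLM π mo q.1 U
  isLM_snd : IsLM π mo q.2 V
  le : U ≤ T
  minimal : ∀ q' ∈ G, ∀ U' V', IsLM π mo q'.1 U' → IsLM π mo q'.2 V' → U' ≤ T →
    ¬ termLT mo (T - U' + V') (T - U + V)

theorem NoRegularReducer.mono {S' : Option (TMon n)} (h : NoRegularReducer π mo G W S)
    (hS : optLE mo S' S) : NoRegularReducer π mo G W S' :=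
  fun q hq V hV hVW S'' hS'' hle => h q hq V hV hVW S'' hS'' (optLE_trans hle hS)

theorem noRegularReducer_of_forall_not_topRed (h : ∀ q ∈ G, ¬ TopRed π mo p q)
    (hv : IsLM π mo p.2 W) (hu : IsLMopt π mo p.1 S) : NoRegularReducer π mo G W S :=
  fun q hq V hV hVW S' hS' hle => h q hq <| Or.inr
    ⟨mt ZeroMemClass.coe_eq_zero.2 hv.ne_zero, mt ZeroMemClass.coe_eq_zero.2 hV.ne_zero,
      W, V, hv, hV, hVW, S, S', hu, hS', hle⟩

theorem not_noRegularReducer_of_mem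
    (hG0 : IsGB π mo {g : TateAlgebra n O π | ((0 : TateAlgebra n O π), g) ∈ G} I0)
    {v : TateAlgebra n O π} (hv : v ∈ I0) (hW : IsLM π mo v W) (S : Option (TMon n)) :
    ¬ NoRegularReducer π mo G W S := by
  obtain ⟨g, hg, V, hV, hVW⟩ := hG0.2 v hv hW.ne_zero W hW
  exact fun h => h (0, g) hg V hV hVW none rfl (optLE_none S)

theorem IsMinimalAt.not_noRegularReducer (hq : IsMinimalAt π mo G T q U V) :
    ¬ NoRegularReducer π mo G (T - U + V) (some T) := fun h =>
  h q hq.mem V hq.isLM_snd le_add_self (some U) hq.isLM_fst <| Or.inl <| by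
    simp only [optMul, monMul, add_tsub_cancel_right]
    exact congrArg some (tsub_add_cancel_of_le hq.le)

variable [IsDomain O] [IsDiscreteValuationRing O]

theorem fst_le_of_noRegularReducer (hπ : Irreducible π)
    (hG0 : IsGB π mo {g : TateAlgebra n O π | ((0 : TateAlgebra n O π), g) ∈ G} I0)
    (hp : p ∈ SigMod I0 f) (hu : IsLM π mo p.1 T) (hv : IsLM π mo p.2 W)
    (hW : NoRegularReducer π mo G W (some T)) : T.1 ≤ W.1 := by
  obtain ⟨Sf, hSf⟩ := exists_isLMopt (mo := mo) hπ f.2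
  -- otherwise `p.1 * f - p.2 ∈ I0` would have leading monomial `W`
  have hnlt : ¬ optLT mo (optMul T Sf) (some W) := fun hlt =>
    not_noRegularReducer_of_mem hG0 hp (IsLM.sub_of_optLT' hπ (hu.mul_isLMopt hπ hSf) hv hlt) _ hW
  cases Sf with
  | none => exact absurd trivial hnlt
  | some Tf => exact (Nat.le_add_right _ _).trans (fst_le_of_termLE (not_termLT_iff.1 hnlt))

theorem exists_isMinimalAt (hπ : Irreducible π) (hfin : G.Finite)
    (h1f : ((1 : TateAlgebra n O π), f) ∈ G) (hsyz : NoSyzygyDivides π mo G T) :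
    ∃ q U V, IsMinimalAt π mo G T q U V := by
  set C := ⋃ q ∈ G,
    {w : TMon n | ∃ U V, IsLM π mo q.1 U ∧ IsLM π mo q.2 V ∧ U ≤ T ∧ w = T - U + V}
  have hC : C.Finite := hfin.biUnion fun q _ => Set.Subsingleton.finite <| by
    rintro _ ⟨U, V, hU, hV, -, rfl⟩ _ ⟨U', V', hU', hV', -, rfl⟩
    rw [hU.unique hU', hV.unique hV']
  have h1 : IsLM π mo ((1 : TateAlgebra n O π) : MvPowerSeries (Fin n) O) 0 := isLM_one hπ
  obtain ⟨Tf, hTf⟩ := exists_isLM (mo := mo) hπ f.2 fun hf =>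
    hsyz _ h1f (ZeroMemClass.coe_eq_zero.1 hf) 0 h1 (zero_le : (0 : TMon n) ≤ T)
  obtain ⟨_, hw, hmin⟩ := Set.exists_min_image C (termKey mo) hC
    ⟨_, Set.mem_biUnion h1f ⟨0, Tf, h1, hTf, zero_le, rfl⟩⟩
  obtain ⟨q, hq, U, V, hU, hV, hUT, rfl⟩ := Set.mem_iUnion₂.1 hw
  refine ⟨q, U, V, hq, hU, hV, hUT, fun q' hq' U' V' hU' hV' hU'T hlt => ?_⟩
  exact not_lt_of_ge (hmin _ (Set.mem_biUnion hq' ⟨U', V', hU', hV', hU'T, rfl⟩))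
    (termLT_iff_termKey.1 hlt)

/-- A reducer `q'` of `(T / U) · V` below `T` makes the J-pair of `q` and `q'` divide `T`; the
element of `G` covering it is then a syzygy dividing `T` or beats the minimality of `q`. -/
theorem IsMinimalAt.noRegularReducer (hπ : Irreducible π)
    (hcov : ∀ p ∈ G, ∀ q ∈ G, ∀ r, IsJPair π mo p q r → CoveredBy π mo r G)
    (hsyz : NoSyzygyDivides π mo G T) (hq : IsMinimalAt π mo G T q U V)
    (hS : optLT mo S (some T)) : NoRegularReducer π mo G (T - U + V) S := by
  intro q' hq' V' hV' hV'W S' hS' hle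
  obtain ⟨t, rfl⟩ := exists_add_of_le hq.le
  set t₁ := V ⊔ V' - V
  obtain ⟨t₂, rfl⟩ : ∃ t₂, t = t₁ + t₂ := exists_add_of_le <|
    tsub_le_iff_right.2 (sup_le le_add_self (add_tsub_cancel_left U t ▸ hV'W))
  have hT : U + (t₁ + t₂) = t₂ + (t₁ + U) := by abel
  have hW : U + (t₁ + t₂) - U + V - V' = t₂ + (V ⊔ V' - V') := by
    rw [add_tsub_cancel_left, add_comm t₁, add_assoc, tsub_add_cancel_of_le le_sup_left,
      add_tsub_assoc_of_le le_sup_right]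
  have hJ : IsJPair π mo q q' (smulPair π t₁ q) := by
    refine ⟨V, V', hq.isLM_snd, hV', ⟨some U, S', hq.isLM_fst, hS', ?_⟩, rfl⟩
    have hlt := optLT_of_optLE_of_optLT hle hS
    rw [hW, optMul_add, hT] at hlt
    exact optLT_optMul_iff.1 hlt
  obtain ⟨q'', hq'', _, U'', hmu, hU'', hU''le, sv, _, hsv, hsp, hcov'⟩ :=
    hcov q hq.mem q' hq' _ hJ
  obtain rfl := hmu.unique (isLM_monTA_mul hπ hq.isLM_fst t₁)
  obtain rfl := hsp.eq_some (isLM_monTA_mul hπ hq.isLM_snd t₁)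
  replace hU''le : U'' ≤ t₁ + U := hU''le
  have hU''T : U'' ≤ U + (t₁ + t₂) := hT ▸ hU''le.trans le_add_self
  cases sv with
  | none => exact hsyz q'' hq'' (ZeroMemClass.coe_eq_zero.1 hsv) U'' hU'' hU''T
  | some V'' =>
    refine hq.minimal q'' hq'' U'' V'' hU'' hsv hU''T ?_
    have e₁ : U + (t₁ + t₂) - U'' + V'' = t₂ + (t₁ + U - U'' + V'') := by
      rw [hT, add_tsub_assoc_of_le hU''le, add_assoc]
    have e₂ : U + (t₁ + t₂) - U + V = t₂ + (t₁ + V) := by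
      rw [add_tsub_cancel_left]
      abel
    rw [e₁, e₂]
    exact termLT_add_left_iff.2 hcov'

end Cover

section CoverTheorem

variable {n : ℕ} {O : Type*} [CommRing O] [IsDomain O] [IsDiscreteValuationRing O] {π : O}
  {mo : MonomialOrder (Fin n)} {I0 : Ideal (TateAlgebra n O π)} {f : TateAlgebra n O π}
  {G : Set (TateAlgebra n O π × TateAlgebra n O π)}
  {p q : TateAlgebra n O π × TateAlgebra n O π} {T U V W : TMon n}

theorem exists_reduction_of_optLT (hπ : Irreducible π) (hGM : G ⊆ SigMod I0 f) (hq : q ∈ G)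
    (hp : p ∈ SigMod I0 f) (hu : IsLM π mo p.1 T) (hv : IsLM π mo p.2 W)
    (hU : IsLM π mo q.1 U) (hUT : U ≤ T) {Sq : Option (TMon n)} (hSq : IsLMopt π mo q.2 Sq)
    (hlt : optLT mo (optMul (T - U) Sq) (some W)) :
    ∃ p' ∈ SigMod I0 f, ∃ S', IsLMopt π mo p'.1 S' ∧ optLT mo S' (some T) ∧
      IsLM π mo p'.2 W := by
  obtain ⟨h, hp', hS, hhq⟩ := exists_reduction hπ hp (hGM hq) hu hU hUT
  obtain ⟨S', hS'⟩ := exists_isLMopt (mo := mo) hπ (p.1 - h * q.1).2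
  exact ⟨_, hp', S', hS', hS S' hS', hv.sub_of_optLT hπ (hhq Sq hSq) hlt⟩

theorem exists_reduction_of_isMinimalAt (hπ : Irreducible π) (hGM : G ⊆ SigMod I0 f)
    (hcov : ∀ p ∈ G, ∀ q ∈ G, ∀ r, IsJPair π mo p q r → CoveredBy π mo r G)
    (hsyz : NoSyzygyDivides π mo G T) (hq : IsMinimalAt π mo G T q U V)
    (hp : p ∈ SigMod I0 f) (hu : IsLM π mo p.1 T) {Sv : Option (TMon n)}
    (hv : IsLMopt π mo p.2 Sv) (hlt : optLT mo Sv (some (T - U + V))) :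
    ∃ p' ∈ SigMod I0 f, ∃ S', IsLMopt π mo p'.1 S' ∧ optLT mo S' (some T) ∧
      IsLM π mo p'.2 (T - U + V) ∧ NoRegularReducer π mo G (T - U + V) S' := by
  obtain ⟨h, hp', hS, hhq⟩ := exists_reduction hπ hp (hGM hq.mem) hu hq.isLM_fst hq.le
  obtain ⟨S', hS'⟩ := exists_isLMopt (mo := mo) hπ (p.1 - h * q.1).2
  exact ⟨_, hp', S', hS', hS S' hS', IsLM.sub_of_optLT' hπ hv (hhq (some V) hq.isLM_snd) hlt,
    hq.noRegularReducer hπ hcov hsyz (hS S' hS')⟩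

/-- `B` bounds the valuation of `LM v`, which never increases along the reduction and, by
`fst_le_of_noRegularReducer`, bounds that of the signature. -/
theorem false_of_noRegularReducer_of_fst_le (hπ : Irreducible π) (hfin : G.Finite)
    (hGM : G ⊆ SigMod I0 f) (h1f : ((1 : TateAlgebra n O π), f) ∈ G)
    (hG0 : IsGB π mo {g : TateAlgebra n O π | ((0 : TateAlgebra n O π), g) ∈ G} I0)
    (hcov : ∀ p ∈ G, ∀ q ∈ G, ∀ r, IsJPair π mo p q r → CoveredBy π mo r G) (B : ℕ)
    (T : TMon n) : ∀ p ∈ SigMod I0 f, ∀ W, IsLM π mo p.1 T → IsLM π mo p.2 W →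
      W.1 ≤ B → NoRegularReducer π mo G W (some T) → False := by
  induction T using (wellFounded_termLT_of_fst_le (mo := mo) B).induction with | _ T ih
  intro p hp W hu hv hWB hW
  have descend : ∀ p' ∈ SigMod I0 f, ∀ W' S', IsLMopt π mo p'.1 S' →
      optLT mo S' (some T) → IsLM π mo p'.2 W' → W'.1 ≤ B →
      NoRegularReducer π mo G W' S' → False := by
    rintro p' hp' W' (_ | T') hS' hlt hv' hW'B hW'
    · exact not_noRegularReducer_of_mem hG0 (snd_mem_of_fst_eq_zero hp' hS') hv' none hW'
    · exact ih T' ⟨(fst_le_of_noRegularReducer hπ hG0 hp' hS' hv' hW').trans hW'B, hlt⟩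
        p' hp' W' hS' hv' hW'B hW'
  by_cases hsyz : NoSyzygyDivides π mo G T
  · obtain ⟨q, U, V, hq⟩ := exists_isMinimalAt hπ hfin h1f hsyz
    rcases termLT_trichotomy (T - U + V) W with hlt | heq | hgt
    · obtain ⟨p', hp', S', hS', hS'T, hv'⟩ := exists_reduction_of_optLT hπ hGM hq.mem hp hu hv
        hq.isLM_fst hq.le (Sq := some V) hq.isLM_snd hlt
      exact descend p' hp' W S' hS' hS'T hv' hWB (hW.mono (optLE_of_optLT hS'T))
    · exact hq.not_noRegularReducer (by rwa [heq])
    · obtain ⟨p', hp', S', hS', hS'T, hv', hW'⟩ :=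
        exists_reduction_of_isMinimalAt hπ hGM hcov hsyz hq hp hu (Sv := some W) hv hgt
      exact descend p' hp' _ S' hS' hS'T hv' ((fst_le_of_termLT hgt).trans hWB) hW'
  · simp only [NoSyzygyDivides, not_forall, not_not] at hsyz
    obtain ⟨q, hq, hq0, U, hU, hUT⟩ := hsyz
    obtain ⟨p', hp', S', hS', hS'T, hv'⟩ := exists_reduction_of_optLT hπ hGM hq hp hu hv hU hUT
      (Sq := none) (ZeroMemClass.coe_eq_zero.2 hq0) trivial
    exact descend p' hp' W S' hS' hS'T hv' hWB (hW.mono (optLE_of_optLT hS'T))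

theorem false_of_noRegularReducer (hπ : Irreducible π) (hfin : G.Finite)
    (hGM : G ⊆ SigMod I0 f) (h1f : ((1 : TateAlgebra n O π), f) ∈ G)
    (hG0 : IsGB π mo {g : TateAlgebra n O π | ((0 : TateAlgebra n O π), g) ∈ G} I0)
    (hcov : ∀ p ∈ G, ∀ q ∈ G, ∀ r, IsJPair π mo p q r → CoveredBy π mo r G)
    (hp : p ∈ SigMod I0 f) {S : Option (TMon n)} (hu : IsLMopt π mo p.1 S)
    (hv : IsLM π mo p.2 W) (hW : NoRegularReducer π mo G W S) : False := by
  cases S with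
  | none => exact not_noRegularReducer_of_mem hG0 (snd_mem_of_fst_eq_zero hp hu) hv none hW
  | some T =>
    exact false_of_noRegularReducer_of_fst_le hπ hfin hGM h1f hG0 hcov W.1 T p hp W hu hv le_rfl hW

theorem false_of_noSyzygyDivides (hπ : Irreducible π) (hfin : G.Finite)
    (hGM : G ⊆ SigMod I0 f) (h1f : ((1 : TateAlgebra n O π), f) ∈ G)
    (hG0 : IsGB π mo {g : TateAlgebra n O π | ((0 : TateAlgebra n O π), g) ∈ G} I0)
    (hcov : ∀ p ∈ G, ∀ q ∈ G, ∀ r, IsJPair π mo p q r → CoveredBy π mo r G)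
    (hp : p ∈ SigMod I0 f) (hu : IsLM π mo p.1 T) (hv : (p.2 : MvPowerSeries (Fin n) O) = 0)
    (hsyz : NoSyzygyDivides π mo G T) : False := by
  obtain ⟨q, U, V, hq⟩ := exists_isMinimalAt hπ hfin h1f hsyz
  obtain ⟨p', hp', S', hS', -, hv', hW'⟩ :=
    exists_reduction_of_isMinimalAt hπ hGM hcov hsyz hq hp hu (Sv := none) hv trivial
  exact false_of_noRegularReducer hπ hfin hGM h1f hG0 hcov hp' hS' hv' hW'

end CoverTheorem

end TateStmt

open TateStmt MvPowerSeries

variable {n : ℕ} {O : Type*} [CommRing O] [IsDomain O] [IsDiscreteValuationRing O]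

/-- Cover theorem for Tate algebras: if the finite set `G ⊆ M` contains
`(1,f)`, `{g : (0,g) ∈ G}` is a Gröbner basis of `I₀`, and every J-pair of `G` is covered
by `G`, then `G` is a strong Gröbner basis of `M`. -/
theorem statement_8 (π : O) (hπ : Irreducible π) (mo : MonomialOrder (Fin n))
    (I0 : Ideal (TateAlgebra n O π)) (f : TateAlgebra n O π)
    (G : Set (TateAlgebra n O π × TateAlgebra n O π))
    (hfin : G.Finite) (hGM : G ⊆ SigMod I0 f)
    (h1f : ((1 : TateAlgebra n O π), f) ∈ G)
    (hG0 : IsGB π mo {g : TateAlgebra n O π | ((0 : TateAlgebra n O π), g) ∈ G} I0)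
    (hcov : ∀ p ∈ G, ∀ q ∈ G, ∀ r, IsJPair π mo p q r → CoveredBy π mo r G) :
    IsSGB π mo I0 f G := by
  refine ⟨hfin, hGM, fun p hp hp0 => ?_⟩
  by_contra! hirr
  obtain ⟨S, hS⟩ := exists_isLMopt (mo := mo) hπ p.1.2
  by_cases hv : (p.2 : MvPowerSeries (Fin n) O) = 0
  · cases S with
    | none =>
      exact hp0 (Prod.ext (ZeroMemClass.coe_eq_zero.1 hS) (ZeroMemClass.coe_eq_zero.1 hv))
    | some T =>
      exact false_of_noSyzygyDivides hπ hfin hGM h1f hG0 hcov hp hS hv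
        fun q hq hq0 U hU hUT => hirr q hq (Or.inl ⟨hq0, T, U, hS, hU, hUT⟩)
  · obtain ⟨W, hW⟩ := exists_isLM (mo := mo) hπ p.2.2 hv
    exact false_of_noRegularReducer hπ hfin hGM h1f hG0 hcov hp hS hW
      (noRegularReducer_of_forall_not_topRed hirr hW hS)
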